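/- Fix a strictly positive p ∈ 𝒫̂ (i.e., p(ω) > 0 for all ω) and α ∈ ℝ, and let K = { y ∈ [-∞,∞)^Ω : ⟨p, y⟩ ≤ α }. Fix ε > 0 and x ∈ ℝ^Ω with ⟨p, x⟩ = α. Then there is δ ∈ (0, ε) such that no point of K ∩ B(x, δ) is weakly dominated by any point of K \ B(x, ε). -/
import Mathlib


open Filter Topology

variable {Ω : Type*}

/-- The extended scalar product `⟨f,g⟩ = Σ_ω f(ω)·g(ω)`, where `EReal`
multiplication satisfies the stipulation `a·0 = 0·a = 0` for all `a`. -/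
noncomputable def eip [Fintype Ω] (f : Ω → ℝ) (g : Ω → EReal) : EReal :=
  ∑ ω, (f ω : EReal) * g ω

/-- Membership in `𝒫̂`: a nonnegative vector on `Ω` summing to `1`. -/
def IsSimplex [Fintype Ω] (v : Ω → ℝ) : Prop :=
  (∀ ω, 0 ≤ v ω) ∧ ∑ ω, v ω = 1

/-- Membership of an extended-real-valued vector `z` in the open sup-norm ball
`B(x,r)` around a finite `x`: each coordinate satisfies `|z(ω) − x(ω)| < r`,
i.e. `x(ω) − r < z(ω) < x(ω) + r` (so no coordinate may be `-∞`). -/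
def inBall [Fintype Ω] (x : Ω → ℝ) (r : ℝ) (z : Ω → EReal) : Prop :=
  ∀ ω, ((x ω - r : ℝ) : EReal) < z ω ∧ z ω < ((x ω + r : ℝ) : EReal)


private lemma ecoe_sum {ι : Type*} (s : Finset ι) (f : ι → ℝ) :
    ((∑ i ∈ s, f i : ℝ) : EReal) = ∑ i ∈ s, (f i : EReal) :=
  map_sum (⟨⟨Real.toEReal, EReal.coe_zero⟩, EReal.coe_add⟩ : ℝ →+ EReal) f s

theorem stmt10 [Fintype Ω] [Nonempty Ω]
    (p : Ω → ℝ) (hp : IsSimplex p) (hppos : ∀ ω, 0 < p ω) (α : ℝ)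
    (K : Set (Ω → EReal))
    (hK : K = {y | (∀ ω, y ω ≠ ⊤) ∧ eip p y ≤ (α : EReal)})
    (ε : ℝ) (hε : 0 < ε) (x : Ω → ℝ) (hx : ∑ ω, p ω * x ω = α) :
    ∃ δ : ℝ, 0 < δ ∧ δ < ε ∧
      ∀ y ∈ K, inBall x δ y →
        ∀ z ∈ K, ¬ inBall x ε z → ¬ (∀ ω, y ω ≤ z ω) := by
  classical
  obtain ⟨hp0, hp1⟩ := hp
  set m : ℝ := Finset.univ.inf' Finset.univ_nonempty p with hm_def
  have hm : 0 < m := by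
    rw [hm_def, Finset.lt_inf'_iff]
    exact fun ω _ => hppos ω
  have hmle : ∀ ω : Ω, m ≤ p ω := fun ω =>
    Finset.inf'_le _ (Finset.mem_univ ω)
  set δ : ℝ := min ε (m * ε) / 2 with hδ_def
  have hδpos : 0 < δ := by positivity
  have hδε : δ < ε := by
    have := min_le_left ε (m * ε); rw [hδ_def]; linarith
  have hδm : δ < m * ε := by
    have h1 := min_le_right ε (m * ε)
    have : 0 < m * ε := by positivity
    rw [hδ_def]; linarith
  refine ⟨δ, hδpos, hδε, ?_⟩
  intro y hy hyB z hz hzB hle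
  subst hK
  obtain ⟨hyT, hyα⟩ := hy
  obtain ⟨hzT, hzα⟩ := hz
  have hybot : ∀ ω, y ω ≠ ⊥ := fun ω =>
    ne_of_gt (lt_of_le_of_lt bot_le (hyB ω).1)
  have hzbot : ∀ ω, z ω ≠ ⊥ := fun ω =>
    ne_of_gt (lt_of_lt_of_le (lt_of_le_of_lt bot_le (hyB ω).1) (hle ω))
  set yr : Ω → ℝ := fun ω => (y ω).toReal with hyr
  set zr : Ω → ℝ := fun ω => (z ω).toReal with hzr
  have hyeq : ∀ ω, y ω = (yr ω : EReal) := fun ω =>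
    (EReal.coe_toReal (hyT ω) (hybot ω)).symm
  have hzeq : ∀ ω, z ω = (zr ω : EReal) := fun ω =>
    (EReal.coe_toReal (hzT ω) (hzbot ω)).symm
  -- real versions of the hypotheses
  have hzα' : ∑ ω, p ω * zr ω ≤ α := by
    have : eip p z = ((∑ ω, p ω * zr ω : ℝ) : EReal) := by
      rw [eip, ecoe_sum]
      exact Finset.sum_congr rfl fun ω _ => by rw [hzeq ω, ← EReal.coe_mul]
    rw [this] at hzα
    exact_mod_cast hzα
  have hyB' : ∀ ω, x ω - δ < yr ω := fun ω => by
    have := (hyB ω).1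
    rw [hyeq ω] at this
    exact_mod_cast this
  have hle' : ∀ ω, yr ω ≤ zr ω := fun ω => by
    have := hle ω
    rw [hyeq ω, hzeq ω] at this
    exact_mod_cast this
  -- some coordinate of z escapes the ε-ball
  rw [inBall] at hzB
  push_neg at hzB
  obtain ⟨ω₀, hω₀⟩ := hzB
  have hzlow : ∀ ω, x ω - δ < zr ω := fun ω =>
    lt_of_lt_of_le (hyB' ω) (hle' ω)
  have hhigh : x ω₀ + ε ≤ zr ω₀ := by
    have hlt : ((x ω₀ - ε : ℝ) : EReal) < z ω₀ := by
      rw [hzeq ω₀]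
      exact_mod_cast lt_trans (by linarith [hzlow ω₀] : x ω₀ - ε < x ω₀ - δ) (hzlow ω₀)
    have h := hω₀ hlt
    rw [hzeq ω₀] at h
    exact_mod_cast h
  -- lower bound on ∑ p ω * zr ω
  set g : Ω → ℝ := fun ω => x ω - δ + (if ω = ω₀ then ε + δ else 0) with hg
  have hzg : ∀ ω, g ω ≤ zr ω := by
    intro ω
    by_cases h : ω = ω₀
    · subst h; simp [hg]; linarith [hhigh]
    · simp [hg, h]; linarith [hzlow ω]
  have hsum : ∑ ω, p ω * g ω =
      (∑ ω, p ω * x ω) - (∑ ω, p ω) * δ + p ω₀ * (ε + δ) := by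
    simp only [hg, mul_add, mul_sub, Finset.sum_add_distrib, mul_ite, mul_zero,
      Finset.sum_ite_eq', Finset.mem_univ, if_true, Finset.sum_sub_distrib,
      ← Finset.sum_mul]
  have hge : ∑ ω, p ω * g ω ≤ ∑ ω, p ω * zr ω :=
    Finset.sum_le_sum fun ω _ => mul_le_mul_of_nonneg_left (hzg ω) (hp0 ω)
  have hmε : δ < p ω₀ * ε :=
    lt_of_lt_of_le hδm (mul_le_mul_of_nonneg_right (hmle ω₀) hε.le)
  have hpδ : 0 ≤ p ω₀ * δ := mul_nonneg (hp0 ω₀) hδpos.le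
  rw [hsum, hx, hp1, one_mul] at hge
  nlinarith [hge, hzα']
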